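/- arXiv:2209.11165 — 2 statements merged into one kernel-verified Lean document; each statement's English description precedes it below -/
import Mathlib

section
/- Let G be a group acting on a set M, let N ⊆ M be a subset, and let H be a subgroup of G. Assume: (i) for every n ∈ N and every g ∈ G, one has g • n ∈ N if and only if g ∈ H; and (ii) for every m ∈ M there exist g ∈ G and n ∈ N with m = g • n. Then the map Φ : G × N → M, Φ(g, n) = g • n, is surjective, and for all (g₁, n₁), (g₂, n₂) ∈ G × N one has Φ(g₁, n₁) = Φ(g₂, n₂) if and only if there exists h ∈ H with g₂ = g₁ · h⁻¹ and n₂ = h • n₁. Consequently Φ descends to a bijection from the quotient of G × N by the relation (g, n) ∼ (g h⁻¹, h • n) (h ∈ H) onto M. -/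
/-- Criterion for a `G`-set `M` to be an induction of a subset `N` along a
subgroup `H ⊆ G`: if `g • n ∈ N ↔ g ∈ H` for all `n ∈ N`, and every point of
`M` is a translate of a point of `N`, then `Φ(g, n) = g • n` is surjective,
`Φ(g₁, n₁) = Φ(g₂, n₂)` iff `(g₂, n₂) = (g₁h⁻¹, h • n₁)` for some `h ∈ H`,
and `Φ` descends to a bijection `G ×_H N ≃ M`. -/
theorem induction_criterion {G M : Type*} [Group G] [MulAction G M]
    (N : Set M) (H : Subgroup G)
    (h1 : ∀ n ∈ N, ∀ g : G, g • n ∈ N ↔ g ∈ H)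
    (h2 : ∀ m : M, ∃ g : G, ∃ n ∈ N, m = g • n) :
    Function.Surjective (fun p : G × N => p.1 • (p.2 : M)) ∧
    (∀ p q : G × N,
      p.1 • (p.2 : M) = q.1 • (q.2 : M) ↔
        ∃ h ∈ H, q.1 = p.1 * h⁻¹ ∧ (q.2 : M) = h • (p.2 : M)) ∧
    ∃ e : Quot (fun p q : G × N =>
        ∃ h ∈ H, q.1 = p.1 * h⁻¹ ∧ (q.2 : M) = h • (p.2 : M)) ≃ M,
      ∀ p : G × N, e (Quot.mk _ p) = p.1 • (p.2 : M) := by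
  have surj : Function.Surjective (fun p : G × N => p.1 • (p.2 : M)) := by
    intro m
    obtain ⟨g, n, hn, hm⟩ := h2 m
    exact ⟨(g, ⟨n, hn⟩), hm.symm⟩
  have iff : ∀ p q : G × N,
      p.1 • (p.2 : M) = q.1 • (q.2 : M) ↔
        ∃ h ∈ H, q.1 = p.1 * h⁻¹ ∧ (q.2 : M) = h • (p.2 : M) := by
    intro ⟨g₁, n₁⟩ ⟨g₂, n₂⟩
    constructor
    · intro h
      refine ⟨g₂⁻¹ * g₁, ?_, by group, ?_⟩
      · rw [← h1 (n₁ : M) n₁.2]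
        have : (g₂⁻¹ * g₁) • (n₁ : M) = (n₂ : M) := by
          rw [mul_smul, h, inv_smul_smul]
        rw [this]; exact n₂.2
      · rw [mul_smul, h, inv_smul_smul]
    · rintro ⟨h, -, rfl, hn⟩
      simp only at hn
      rw [hn]
      simp [mul_smul]
  refine ⟨surj, iff, ?_⟩
  have lift_sound : ∀ p q : G × N,
      (∃ h ∈ H, q.1 = p.1 * h⁻¹ ∧ (q.2 : M) = h • (p.2 : M)) →
      p.1 • (p.2 : M) = q.1 • (q.2 : M) := fun p q h => (iff p q).2 h
  let f := Quot.lift (fun p : G × N => p.1 • (p.2 : M)) lift_sound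
  have hbij : Function.Bijective f := by
    constructor
    · intro a b
      induction a using Quot.ind with | _ p =>
      induction b using Quot.ind with | _ q =>
      intro h
      exact Quot.sound ((iff p q).1 h)
    · intro m
      obtain ⟨p, hp⟩ := surj m
      exact ⟨Quot.mk _ p, hp⟩
  exact ⟨Equiv.ofBijective f hbij, fun p => rfl⟩
end

section
/- Let W and E be finite-dimensional real vector spaces, Γ a finite group acting linearly on W and linearly on E, and let Γ act trivially on ℝ^ℓ, hence diagonally on W × ℝ^ℓ. Let Q = W × {x ∈ ℝ^ℓ : x_j ≥ 0 for all j}, and for T ⊆ {1, …, ℓ} let π_T : W × ℝ^ℓ → W × ℝ^ℓ be the linear projection setting to zero the coordinates x_j with j ∉ T. Let U ⊆ Q be a relatively open neighborhood of 0 with π_T(U) ⊆ U for all T. Let ∂U = {(w, x) ∈ U : x_j = 0 for some j} and, for each j, let U_j = {(w, x) ∈ U : x_j = 0}. Suppose s : ∂U → E is continuous and Γ-equivariant, and the restriction of s to each face U_j is smooth (C^∞ in the sense of differentiability within U_j). Then there exists a smooth Γ-equivariant map S : U → E (C^∞ in the sense of differentiability within U) with S = s on ∂U. -/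
/-- Equivariant smooth extension from the boundary faces of
`U ⊆ W × ℝ^ℓ_+`: a continuous `Γ`-equivariant map `s` on
`∂U = {p ∈ U | some orthant coordinate vanishes}` that is smooth on each face
`U_j = {p ∈ U | p.2 j = 0}` extends to a smooth `Γ`-equivariant map on `U`,
provided `U` is a relatively open neighborhood of `0` in
`Q = W × ℝ^ℓ_+` stable under all the coordinate projections `π_T`. -/
theorem equivariant_smooth_extension {W E : Type*}
    [NormedAddCommGroup W] [NormedSpace ℝ W] [FiniteDimensional ℝ W]
    [NormedAddCommGroup E] [NormedSpace ℝ E] [FiniteDimensional ℝ E]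
    {Γ : Type*} [Group Γ] [Finite Γ]
    (ρW : Γ →* (W ≃ₗ[ℝ] W)) (ρE : Γ →* (E ≃ₗ[ℝ] E))
    {ℓ : ℕ} (U : Set (W × (Fin ℓ → ℝ)))
    (hUQ : U ⊆ {p | ∀ j, 0 ≤ p.2 j})
    (hU0 : (0 : W × (Fin ℓ → ℝ)) ∈ U)
    (hUopen : ∃ Vo : Set (W × (Fin ℓ → ℝ)), IsOpen Vo ∧
      U = Vo ∩ {p | ∀ j, 0 ≤ p.2 j})
    (hUproj : ∀ T : Finset (Fin ℓ), ∀ p ∈ U,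
      ((p.1, fun j => if j ∈ T then p.2 j else 0) : W × (Fin ℓ → ℝ)) ∈ U)
    (hUinv : ∀ γ : Γ, ∀ p ∈ U, ((ρW γ p.1, p.2) : W × (Fin ℓ → ℝ)) ∈ U)
    (s : W × (Fin ℓ → ℝ) → E)
    (hscont : ContinuousOn s {p ∈ U | ∃ j, p.2 j = 0})
    (hssmooth : ∀ j : Fin ℓ, ContDiffOn ℝ (⊤ : ℕ∞) s {p ∈ U | p.2 j = 0})
    (hsequiv : ∀ γ : Γ, ∀ p ∈ {p ∈ U | ∃ j, p.2 j = 0},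
      s (ρW γ p.1, p.2) = ρE γ (s p)) :
    ∃ S : W × (Fin ℓ → ℝ) → E,
      ContDiffOn ℝ (⊤ : ℕ∞) S U ∧
      (∀ γ : Γ, ∀ p ∈ U, S (ρW γ p.1, p.2) = ρE γ (S p)) ∧
      ∀ p ∈ {p ∈ U | ∃ j, p.2 j = 0}, S p = s p := by
  classical
  -- the coordinate projections
  set π : Finset (Fin ℓ) → (W × (Fin ℓ → ℝ)) → W × (Fin ℓ → ℝ) :=
    fun T p => (p.1, fun j => if j ∈ T then p.2 j else 0) with hπ
  -- the coefficients
  set c : Finset (Fin ℓ) → ℝ := fun T => (-1 : ℝ) ^ (T.card + ℓ + 1) with hc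
  -- index set: proper subsets of Fin ℓ
  set I : Finset (Finset (Fin ℓ)) :=
    (Finset.univ : Finset (Fin ℓ)).powerset.erase Finset.univ with hI
  have hπsmooth : ∀ T : Finset (Fin ℓ), ContDiff ℝ (⊤ : WithTop ℕ∞) (π T) := by
    intro T
    refine ContDiff.prodMk contDiff_fst (contDiff_pi.2 fun j => ?_)
    by_cases hj : j ∈ T
    · simp only [hj, if_true]
      exact ((ContinuousLinearMap.proj (R := ℝ) (φ := fun _ : Fin ℓ => ℝ) j).contDiff.comp contDiff_snd : ContDiff ℝ _ fun p : W × (Fin ℓ → ℝ) => p.2 j)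
    · simp only [hj, if_false]
      exact contDiff_const
  have hπmem : ∀ T : Finset (Fin ℓ), ∀ p ∈ U, π T p ∈ U := fun T p hp => hUproj T p hp
  have hπface : ∀ T : Finset (Fin ℓ), ∀ j ∉ T, ∀ p, (π T p).2 j = 0 := by
    intro T j hj p
    simp [hπ, hj]
  refine ⟨fun p => ∑ T ∈ I, c T • s (π T p), ?_, ?_, ?_⟩
  · -- smoothness
    apply ContDiffOn.sum
    intro T hT
    have hTne : T ≠ Finset.univ := (Finset.mem_erase.1 hT).1
    obtain ⟨j0, hj0⟩ : ∃ j, j ∉ T := by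
      by_contra h
      push_neg at h
      exact hTne (Finset.eq_univ_iff_forall.2 h)
    have hmaps : Set.MapsTo (π T) U {p ∈ U | p.2 j0 = 0} := by
      intro p hp
      exact ⟨hπmem T p hp, hπface T j0 hj0 p⟩
    exact ((hssmooth j0).comp ((hπsmooth T).of_le le_top).contDiffOn hmaps).const_smul (c T)
  · -- equivariance
    intro γ p hp
    have key : ∀ T ∈ I, s (π T (ρW γ p.1, p.2)) = ρE γ (s (π T p)) := by
      intro T hT
      have hTne : T ≠ Finset.univ := (Finset.mem_erase.1 hT).1
      obtain ⟨j0, hj0⟩ : ∃ j, j ∉ T := by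
        by_contra h
        push_neg at h
        exact hTne (Finset.eq_univ_iff_forall.2 h)
      have heq : π T (ρW γ p.1, p.2) = (ρW γ (π T p).1, (π T p).2) := rfl
      rw [heq]
      exact hsequiv γ (π T p) ⟨hπmem T p hp, ⟨j0, hπface T j0 hj0 p⟩⟩
    calc ∑ T ∈ I, c T • s (π T (ρW γ p.1, p.2))
        = ∑ T ∈ I, c T • (ρE γ (s (π T p))) := by
          exact Finset.sum_congr rfl fun T hT => by rw [key T hT]
      _ = ρE γ (∑ T ∈ I, c T • s (π T p)) := by
          rw [map_sum]
          exact Finset.sum_congr rfl fun T _ => (map_smul (ρE γ) (c T) _).symm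
  · -- extension property
    rintro p ⟨hpU, j0, hj0⟩
    have hπerase : ∀ T : Finset (Fin ℓ), π T p = π (T.erase j0) p := by
      intro T
      refine Prod.ext rfl (funext fun j => ?_)
      by_cases hjj : j = j0
      · subst hjj
        simp [hπ, hj0]
      · simp [hπ, Finset.mem_erase, hjj]
    -- the total (inclusion–exclusion) sum over all subsets vanishes
    have htotal : ∑ T ∈ (Finset.univ : Finset (Fin ℓ)).powerset,
        c T • s (π (T.erase j0) p) = 0 := by
      have huniv : (Finset.univ : Finset (Fin ℓ)) =
          insert j0 (Finset.univ.erase j0) := (Finset.insert_erase (Finset.mem_univ j0)).symm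
      rw [huniv, Finset.sum_powerset_insert (Finset.notMem_erase j0 _)]
      rw [← Finset.sum_add_distrib]
      apply Finset.sum_eq_zero
      intro t ht
      have hj0t : j0 ∉ t := fun h => Finset.notMem_erase j0 _ (Finset.mem_powerset.1 ht h)
      have h1 : (insert j0 t).erase j0 = t := Finset.erase_insert hj0t
      have h2 : t.erase j0 = t := Finset.erase_eq_of_notMem hj0t
      have h3 : c (insert j0 t) = -(c t) := by
        rw [hc]
        simp only [Finset.card_insert_of_notMem hj0t]
        rw [show t.card + 1 + ℓ + 1 = (t.card + ℓ + 1) + 1 by ring, pow_succ]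
        ring
      rw [h1, h2, h3, neg_smul]
      exact add_neg_cancel _
    have huniv_mem : (Finset.univ : Finset (Fin ℓ)) ∈
        (Finset.univ : Finset (Fin ℓ)).powerset := Finset.mem_powerset_self _
    have hsplit : (∑ T ∈ I, c T • s (π (T.erase j0) p)) +
        c Finset.univ • s (π ((Finset.univ : Finset (Fin ℓ)).erase j0) p) =
        ∑ T ∈ (Finset.univ : Finset (Fin ℓ)).powerset, c T • s (π (T.erase j0) p) := by
      rw [hI]
      exact Finset.sum_erase_add _ _ huniv_mem
    have hcardu : (Finset.univ : Finset (Fin ℓ)).card = ℓ := by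
      simp [Finset.card_univ]
    have hcuniv : c Finset.univ = -1 := by
      rw [hc]
      simp only [hcardu]
      rw [show ℓ + ℓ + 1 = 2 * ℓ + 1 by ring, pow_succ, pow_mul]
      norm_num
    have hπuniv : π ((Finset.univ : Finset (Fin ℓ)).erase j0) p = p := by
      refine Prod.ext rfl (funext fun j => ?_)
      by_cases hjj : j = j0
      · subst hjj
        simp [hπ, hj0]
      · simp [hπ, Finset.mem_erase, hjj]
    have : (∑ T ∈ I, c T • s (π (T.erase j0) p)) = s p := by
      have := hsplit.trans htotal
      rw [hcuniv, hπuniv, neg_one_smul, ← sub_eq_add_neg] at this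
      exact sub_eq_zero.mp this
    calc ∑ T ∈ I, c T • s (π T p)
        = ∑ T ∈ I, c T • s (π (T.erase j0) p) :=
          Finset.sum_congr rfl fun T _ => by rw [hπerase T]
      _ = s p := this
end
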